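/- Let n ≥ 5 and let a league outcome with n teams be tied with common score p. If p ≤ 3n−4, then for every team A, (n−1)·p − P̄(A) ≤ 3(n−1)(n−2) − 3. -/

import Mathlib

open Finset

inductive MatchResult : Type
  | homeWin : MatchResult
  | draw : MatchResult
  | awayWin : MatchResult
  deriving DecidableEq

instance instFintypeMatchResult : Fintype MatchResult :=
  ⟨{.homeWin, .draw, .awayWin}, fun x => by cases x <;> decide⟩

/-- A league outcome: a result for each ordered pair of distinct teams
(the first component is the home team). -/
abbrev LeagueOutcome (n : ℕ) : Type :=
  {p : Fin n × Fin n // p.1 ≠ p.2} → MatchResult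

/-- Points earned by the home team. -/
def homePts : MatchResult → ℕ
  | .homeWin => 3
  | .draw => 1
  | .awayWin => 0

/-- Points earned by the away team. -/
def awayPts : MatchResult → ℕ
  | .homeWin => 0
  | .draw => 1
  | .awayWin => 3

/-- Total points of team `i`: sum over all matches of the points `i` earns in them. -/
def totalPoints {n : ℕ} (r : LeagueOutcome n) (i : Fin n) : ℕ :=
  ∑ m : {p : Fin n × Fin n // p.1 ≠ p.2},
    ((if m.val.1 = i then homePts (r m) else 0) +
     (if m.val.2 = i then awayPts (r m) else 0))

/-- Total points the other teams earn in their matches against team `i`. -/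
def oppPoints {n : ℕ} (r : LeagueOutcome n) (i : Fin n) : ℕ :=
  ∑ m : {p : Fin n × Fin n // p.1 ≠ p.2},
    ((if m.val.1 = i then awayPts (r m) else 0) +
     (if m.val.2 = i then homePts (r m) else 0))

/-- Number of matches that team `i` wins. -/
def wins {n : ℕ} (r : LeagueOutcome n) (i : Fin n) : ℕ :=
  (Finset.univ.filter (fun m : {p : Fin n × Fin n // p.1 ≠ p.2} =>
    (m.val.1 = i ∧ r m = .homeWin) ∨ (m.val.2 = i ∧ r m = .awayWin))).card

/-- Number of matches that team `i` draws. -/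
def draws {n : ℕ} (r : LeagueOutcome n) (i : Fin n) : ℕ :=
  (Finset.univ.filter (fun m : {p : Fin n × Fin n // p.1 ≠ p.2} =>
    (m.val.1 = i ∨ m.val.2 = i) ∧ r m = .draw)).card

/-- Number of matches that team `i` loses. -/
def losses {n : ℕ} (r : LeagueOutcome n) (i : Fin n) : ℕ :=
  (Finset.univ.filter (fun m : {p : Fin n × Fin n // p.1 ≠ p.2} =>
    (m.val.1 = i ∧ r m = .awayWin) ∨ (m.val.2 = i ∧ r m = .homeWin))).card

/-!
Since a decisive match distributes 3 points and a draw 2, the points of a tied league satisfy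
`n p + D = 3 n (n - 1)`, where `D` is the number of draws, and the matches of a team `A` give
`p + P̄(A) + d_A = 6 (n - 1)`, where `d_A` is the number of draws of `A`. Eliminating `p` and `P̄(A)`,
the claim becomes `d_A + 3 ≤ D`. Writing `p = 3 (n - 1) - k` with `k ≥ 1`, we have `D = k n`.
For `k ≥ 3` this beats the trivial bound `d_A ≤ 2 (n - 1)`. For `k = 2`, `d_A = 2 (n - 1)` would
mean `A` drew every match and scored `2 (n - 1) ≠ 3n - 5`. For `k = 1`, every team scores
`3n - 4 ≡ 2 (mod 3)` and so draws at least twice; as the draw counts add up to `2D = 2n`,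
`d_A = 2 ≤ n - 3`.
-/

abbrev Fixture (n : ℕ) := {p : Fin n × Fin n // p.1 ≠ p.2}

def totalDraws {n : ℕ} (r : LeagueOutcome n) : ℕ :=
  #{m : Fixture n | r m = .draw}

section Counting

variable {n : ℕ}

lemma Fixture.card_filter_home (i : Fin n) : #{m : Fixture n | m.val.1 = i} = n - 1 := by
  rw [show n - 1 = #(univ.erase i) by simp]
  refine card_bij' (fun m _ => m.val.2) (fun j hj => ⟨(i, j), by simp_all [eq_comm]⟩) ?_ ?_ ?_ ?_
  · intro m hm
    simp only [mem_filter, mem_univ, true_and] at hm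
    simpa [← hm] using fun h => m.prop h.symm
  · simp
  · intro m hm
    simp only [mem_filter, mem_univ, true_and] at hm
    exact Subtype.ext (Prod.ext hm.symm rfl)
  · simp

lemma Fixture.card_filter_away (i : Fin n) : #{m : Fixture n | m.val.2 = i} = n - 1 := by
  rw [show n - 1 = #(univ.erase i) by simp]
  refine card_bij' (fun m _ => m.val.1) (fun j hj => ⟨(j, i), by simp_all⟩) ?_ ?_ ?_ ?_
  · intro m hm
    simp only [mem_filter, mem_univ, true_and] at hm
    simpa [← hm] using m.prop
  · simp
  · intro m hm
    simp only [mem_filter, mem_univ, true_and] at hm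
    exact Subtype.ext (Prod.ext rfl hm.symm)
  · simp

lemma Fixture.card_filter_involving (i : Fin n) :
    #{m : Fixture n | m.val.1 = i ∨ m.val.2 = i} = 2 * (n - 1) := by
  rw [filter_or, card_union_of_disjoint, card_filter_home, card_filter_away, two_mul]
  rw [disjoint_left]
  intro m h1 h2
  simp only [mem_filter, mem_univ, true_and] at h1 h2
  exact m.prop (h1.trans h2.symm)

lemma Fixture.card : Fintype.card (Fixture n) = n * (n - 1) := by
  rw [Fintype.card_subtype,
    show ({q | q.1 ≠ q.2} : Finset (Fin n × Fin n)) = univ.offDiag by ext; simp,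
    offDiag_card, card_univ, Fintype.card_fin, Nat.mul_sub_one]

end Counting

section Points

variable {n : ℕ} (r : LeagueOutcome n)

lemma totalPoints_eq (i : Fin n) : totalPoints r i = 3 * wins r i + draws r i := by
  simp only [totalPoints, wins, draws, card_filter, mul_sum, ← sum_add_distrib]
  refine sum_congr rfl fun m _ => ?_
  have := m.prop
  by_cases h1 : m.val.1 = i <;> by_cases h2 : m.val.2 = i <;>
    cases r m <;> simp_all [homePts, awayPts]

lemma oppPoints_eq (i : Fin n) : oppPoints r i = 3 * losses r i + draws r i := by
  simp only [oppPoints, losses, draws, card_filter, mul_sum, ← sum_add_distrib]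
  refine sum_congr rfl fun m _ => ?_
  have := m.prop
  by_cases h1 : m.val.1 = i <;> by_cases h2 : m.val.2 = i <;>
    cases r m <;> simp_all [homePts, awayPts]

lemma wins_add_draws_add_losses (i : Fin n) :
    wins r i + draws r i + losses r i = 2 * (n - 1) := by
  simp only [wins, draws, losses, ← Fixture.card_filter_involving i, card_filter,
    ← sum_add_distrib]
  refine sum_congr rfl fun m _ => ?_
  have := m.prop
  by_cases h1 : m.val.1 = i <;> by_cases h2 : m.val.2 = i <;> cases r m <;> simp_all

lemma totalPoints_add_oppPoints_add_draws (i : Fin n) :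
    totalPoints r i + oppPoints r i + draws r i = 6 * (n - 1) := by
  linarith [totalPoints_eq r i, oppPoints_eq r i, wins_add_draws_add_losses r i]

lemma sum_totalPoints_add_totalDraws :
    ∑ i, totalPoints r i + totalDraws r = 3 * (n * (n - 1)) := by
  simp only [totalPoints, totalDraws, ← Fixture.card, Fintype.card_eq_sum_ones, card_filter,
    mul_sum]
  rw [sum_comm, ← sum_add_distrib]
  refine sum_congr rfl fun m _ => ?_
  rw [sum_add_distrib, sum_ite_eq, sum_ite_eq]
  cases r m <;> simp [homePts, awayPts]

lemma sum_draws : ∑ i, draws r i = 2 * totalDraws r := by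
  simp only [draws, totalDraws, card_filter, mul_sum]
  rw [sum_comm]
  refine sum_congr rfl fun m _ => ?_
  have hne : m.val.1 ≠ m.val.2 := m.prop
  by_cases hd : r m = .draw
  · simp only [hd, and_true, if_true, sum_boole, Nat.cast_id, mul_one]
    rw [show ({x | m.val.1 = x ∨ m.val.2 = x} : Finset (Fin n)) = {m.val.1, m.val.2} by
      ext; simp [eq_comm], card_pair hne]
  · simp [hd]

end Points

section Tied

variable {n p : ℕ} {r : LeagueOutcome n}

lemma mul_add_totalDraws_of_tied (h : ∀ i, totalPoints r i = p) :
    n * p + totalDraws r = 3 * (n * (n - 1)) := by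
  simpa [h] using sum_totalPoints_add_totalDraws r

lemma draws_add_le_two_mul_totalDraws (r : LeagueOutcome n) (A : Fin n) {c : ℕ}
    (hc : ∀ i ≠ A, c ≤ draws r i) : draws r A + (n - 1) * c ≤ 2 * totalDraws r := by
  rw [← sum_draws, ← add_sum_erase _ _ (mem_univ A)]
  have := card_nsmul_le_sum (univ.erase A) (draws r) c fun i hi => hc i (ne_of_mem_erase hi)
  simpa using this

lemma two_le_draws (i : Fin n) (hi : totalPoints r i % 3 = 2) : 2 ≤ draws r i := by
  have := totalPoints_eq r i
  omega

lemma draws_add_three_le_totalDraws_of_tied (hn : 5 ≤ n) (h : ∀ i, totalPoints r i = p)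
    (hp : p < 3 * (n - 1)) (A : Fin n) : draws r A + 3 ≤ totalDraws r := by
  obtain ⟨k, hk⟩ : ∃ k, p + k = 3 * (n - 1) := ⟨_, Nat.add_sub_cancel' hp.le⟩
  have hD : totalDraws r = n * k := by
    have := mul_add_totalDraws_of_tied h
    rw [mul_left_comm, ← hk, mul_add] at this
    omega
  have hPA := totalPoints_eq r A
  have hWA := wins_add_draws_add_losses r A
  rw [h] at hPA
  rcases (by omega : k = 1 ∨ k = 2 ∨ 3 ≤ k) with rfl | rfl | hk3
  · have := draws_add_le_two_mul_totalDraws r A (c := 2) fun i _ =>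
      two_le_draws i (by rw [h]; omega)
    rw [mul_one] at hD
    omega
  · omega
  · have := Nat.mul_le_mul_left n hk3
    omega

end Tied

/-- for `n ≥ 5`, in a league tied with common score `p ≤ 3n−4`,
`(n−1)·p − P̄(A) ≤ 3(n−1)(n−2) − 3` for every team `A`. -/
theorem tied_second_constraint (n : ℕ) (hn : 5 ≤ n) (r : LeagueOutcome n) (p : ℕ)
    (h : ∀ i, totalPoints r i = p) (hp : p ≤ 3 * n - 4) :
    ∀ A : Fin n,
      ((n : ℤ) - 1) * (p : ℤ) - (oppPoints r A : ℤ) ≤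
        3 * ((n : ℤ) - 1) * ((n : ℤ) - 2) - 3 := by
  intro A
  have hD := mul_add_totalDraws_of_tied h
  have hA := totalPoints_add_oppPoints_add_draws r A
  have key := draws_add_three_le_totalDraws_of_tied hn h (by omega) A
  rw [h] at hA
  zify [show 1 ≤ n by omega] at hD hA key
  linarith
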